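/- arXiv:2307.03156 — 5 statements merged into one kernel-verified Lean document; each statement's English description precedes it below -/
import Mathlib

section
/- Let q be a prime, d ≥ 2, 1 ≤ m ≤ d−1, and λ ∈ (ℤ/qℤ)*. Fix linearly independent vectors a₁,…,a_{d−m} in (ℤ/qℤ)^d. Then the number of m-tuples (b₁,…,b_m) of vectors in (ℤ/qℤ)^d such that det(a₁,…,a_{d−m},b₁,…,b_m) = λ equals q^{dm−1} · ∏_{j=2}^{m} (1 − q^{−j}). -/
/-!
Multiplying `b₁` by a unit `c` multiplies `det(a, b)` by `c`, so every nonzero value of the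
determinant is taken equally often and the count is `#{b | det(a, b) ≠ 0} / (q - 1)`.
The determinant is nonzero iff `(a, b)` is linearly independent, i.e. iff the images of the `bᵢ`
in the `m`-dimensional space `V ⧸ span a` are independent. There are `∏ᵢ (q^m - q^i)` such
image tuples, each with `q^((d-m)m)` lifts, and dividing by `q - 1` gives the stated product.
-/

open Finset Matrix

theorem card_filter_comp_eq_mul_of_card_fiber_eq {X Y : Type*} [Fintype X] [Fintype Y]
    [DecidableEq Y] (f : X → Y) (P : Y → Prop) [DecidablePred P] {N : ℕ}
    (hN : ∀ y, P y → #{x | f x = y} = N) :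
    #{x | P (f x)} = #{y | P y} * N := by
  rw [← sum_const_nat fun y hy => hN y (mem_filter.mp hy).2, sum_card_fiberwise_eq_card_filter]
  simp

section Scaling

variable {X K : Type*} [Fintype X] [Field K] [DecidableEq K] (f : X → K)

theorem card_fiber_eq_of_forall_units
    (hf : ∀ c : Kˣ, ∃ σ : X ≃ X, ∀ x, f (σ x) = c * f x)
    {u v : K} (hu : u ≠ 0) (hv : v ≠ 0) :
    #{x | f x = u} = #{x | f x = v} := by
  obtain ⟨σ, hσ⟩ := hf (Units.mk0 v hv / Units.mk0 u hu)
  rw [← Fintype.card_subtype, ← Fintype.card_subtype]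
  refine Fintype.card_congr (σ.subtypeEquiv fun x => ?_)
  rw [hσ, Units.val_div_eq_div_val, Units.val_mk0, Units.val_mk0, div_mul_eq_mul_div,
    div_eq_iff hu, mul_right_inj' hv]

theorem card_filter_ne_zero_eq_mul_card_fiber [Fintype K]
    (hf : ∀ c : Kˣ, ∃ σ : X ≃ X, ∀ x, f (σ x) = c * f x) {u : K} (hu : u ≠ 0) :
    #{x | f x ≠ 0} = (Fintype.card K - 1) * #{x | f x = u} := by
  rw [card_filter_comp_eq_mul_of_card_fiber_eq f (· ≠ 0)
      fun v hv => card_fiber_eq_of_forall_units f hf hv hu,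
    filter_ne', card_erase_of_mem (mem_univ _), card_univ]

end Scaling

theorem AddMonoidHom.card_comp_mul_card_of_surjective {G H : Type*} [AddGroup G] [AddGroup H]
    [Finite G] [Finite H] (f : G →+ H) (hf : Function.Surjective f) (P : H → Prop) :
    Nat.card {x // P (f x)} * Nat.card H = Nat.card {y // P y} * Nat.card G := by
  classical
  have : Fintype G := Fintype.ofFinite G
  have : Fintype H := Fintype.ofFinite H
  have hcount (Q : H → Prop) [DecidablePred Q] : #{x | Q (f x)} = #{y | Q y} * #{x | f x = 0} :=
    card_filter_comp_eq_mul_of_card_fiber_eq f Q fun y _ =>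
      AddMonoidHom.card_fiber_eq_of_mem_range f (hf y) (hf 0)
  have hG := hcount fun _ => True
  simp only [filter_true, card_univ] at hG
  simp only [Nat.card_eq_fintype_card, Fintype.card_subtype]
  rw [hcount P, hG]
  ring

theorem linearIndependent_sumElim_iff_mkQ {R M ι κ : Type*} [Ring R] [AddCommGroup M] [Module R M]
    {a : ι → M} (ha : LinearIndependent R a) (b : κ → M) :
    LinearIndependent R (Sum.elim a b) ↔
      LinearIndependent R ((Submodule.span R (Set.range a)).mkQ ∘ b) := by
  constructor
  · intro h
    obtain ⟨-, hb, hdisj⟩ := linearIndependent_sum.mp h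
    exact hb.map (by rw [Submodule.ker_mkQ]; exact hdisj.symm)
  · intro h
    have ha' : LinearIndependent R fun i => (⟨a i, Submodule.subset_span ⟨i, rfl⟩⟩ :
        Submodule.span R (Set.range a)) :=
      .of_comp (Submodule.span R (Set.range a)).subtype ha
    exact ha'.sumElim_of_quotient b h

open Module in
theorem card_linearIndependent_sumElim {K V κ : Type*} [Field K] [Fintype K] [AddCommGroup V]
    [Module K V] [Finite V] [Fintype κ] {a : κ → V} (ha : LinearIndependent K a) {m : ℕ}
    (hm : Fintype.card κ + m ≤ finrank K V) :
    Nat.card {b : Fin m → V // LinearIndependent K (Sum.elim a b)} =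
      Fintype.card K ^ (Fintype.card κ * m) *
        ∏ i : Fin m,
          (Fintype.card K ^ (finrank K V - Fintype.card κ) - Fintype.card K ^ i.val) := by
  set W := Submodule.span K (Set.range a)
  have hW : finrank K (V ⧸ W) = finrank K V - Fintype.card κ := by
    rw [← W.finrank_quotient_add_finrank, finrank_span_eq_card ha, Nat.add_sub_cancel]
  have : Finite (V ⧸ W) := Module.finite_of_finite K
  let π := (LinearMap.compLeft W.mkQ (Fin m)).toAddMonoidHom
  have hπ : Nat.card {b : Fin m → V // LinearIndependent K (Sum.elim a b)} =
      Nat.card {b // LinearIndependent K (π b)} :=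
    Nat.card_congr (.subtypeEquivRight fun b => linearIndependent_sumElim_iff_mkQ ha b)
  have key :=
    π.card_comp_mul_card_of_surjective W.mkQ_surjective.comp_left (LinearIndependent K ·)
  rw [card_linearIndependent (by omega), Nat.card_fun, Nat.card_fun,
    Nat.card_eq_fintype_card (α := Fin m), Fintype.card_fin,
    Module.natCard_eq_pow_finrank (K := K) (V := V ⧸ W),
    Module.natCard_eq_pow_finrank (K := K) (V := V),
    Nat.card_eq_fintype_card (α := K), hW] at key
  have hsplit : (Fintype.card K ^ finrank K V) ^ m =
      Fintype.card K ^ (Fintype.card κ * m) *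
        (Fintype.card K ^ (finrank K V - Fintype.card κ)) ^ m := by
    rw [← pow_mul, ← pow_mul, ← pow_add, ← add_mul, Nat.add_sub_cancel' (by omega)]
  rw [hπ]
  refine Nat.eq_of_mul_eq_mul_right (pow_pos (pow_pos Fintype.card_pos _) m) (key.trans ?_)
  rw [hsplit]
  ring

section SumElim

variable {K κ μ n : Type*} [Field K] [Fintype n] [DecidableEq n]
  (e : κ ⊕ μ ≃ n) (a : κ → n → K) (b : μ → n → K)

theorem Matrix.det_of_sumElim_update_smul [DecidableEq μ] (i : μ) (c : K) :
    (of (Sum.elim a (Function.update b i (c • b i)) ∘ e.symm)).det =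
      c * (of (Sum.elim a b ∘ e.symm)).det := by
  classical
  let v := Sum.elim a b ∘ e.symm
  have h := detRowAlternating.map_update_smul v (e (.inr i)) c (v (e (.inr i)))
  rw [Function.update_eq_self] at h
  rw [← Sum.update_elim_inr, Function.update_comp_equiv, e.symm_symm]
  simp only [v, Function.comp_apply, Equiv.symm_apply_apply, Sum.elim_inr] at h
  exact h

theorem Matrix.det_of_sumElim_ne_zero_iff :
    (of (Sum.elim a b ∘ e.symm)).det ≠ 0 ↔ LinearIndependent K (Sum.elim a b) := by
  rw [← isUnit_iff_ne_zero, ← isUnit_iff_isUnit_det, ← linearIndependent_rows_iff_isUnit]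
  exact linearIndependent_equiv e.symm

end SumElim

theorem sub_one_mul_card_filter_det_of_sumElim_eq {K κ n : Type*} [Field K] [Fintype K]
    [DecidableEq K] [Fintype κ] [Fintype n] [DecidableEq n] {m : ℕ} [NeZero m]
    (e : κ ⊕ Fin m ≃ n) {a : κ → n → K} (ha : LinearIndependent K a) {u : K} (hu : u ≠ 0) :
    (Fintype.card K - 1) * #{b : Fin m → n → K | (of (Sum.elim a b ∘ e.symm)).det = u} =
      Fintype.card K ^ (Fintype.card κ * m) *
        ∏ i : Fin m, (Fintype.card K ^ m - Fintype.card K ^ (i : ℕ)) := by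
  have hscale (c : Kˣ) : ∃ σ : (Fin m → n → K) ≃ (Fin m → n → K),
      ∀ b, (of (Sum.elim a (σ b) ∘ e.symm)).det = c * (of (Sum.elim a b ∘ e.symm)).det := by
    refine ⟨MulAction.toPerm (Pi.mulSingle 0 c : Fin m → Kˣ), fun b => ?_⟩
    convert det_of_sumElim_update_smul e a b 0 (c : K) using 5
    ext j : 1
    by_cases h : j = 0 <;> simp [h, Units.smul_def]
  have hn : Fintype.card n = Fintype.card κ + m := by
    rw [← Fintype.card_congr e, Fintype.card_sum, Fintype.card_fin]
  rw [← card_filter_ne_zero_eq_mul_card_fiber _ hscale hu, ← Fintype.card_subtype, ← Nat.card_eq_fintype_card,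
    Nat.card_congr (.subtypeEquivRight fun b => det_of_sumElim_ne_zero_iff e a b),
    card_linearIndependent_sumElim ha (by simp [hn]), Module.finrank_fintype_fun_eq_card, hn,
    Nat.add_sub_cancel_left]

theorem prod_range_pow_sub_pow {K : Type*} [Field K] {Q : K} (hQ : Q ≠ 0) (m : ℕ) :
    ∏ i ∈ range m, (Q ^ m - Q ^ i) = Q ^ (m * m) * ∏ j ∈ Icc 1 m, (1 - Q⁻¹ ^ j) := by
  induction m with
  | zero => simp
  | succ m ih =>
    have hfactor : ∏ i ∈ range m, (Q ^ (m + 1) - Q ^ (i + 1)) =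
        Q ^ m * ∏ i ∈ range m, (Q ^ m - Q ^ i) := by
      simp_rw [pow_succ', ← mul_sub]
      rw [prod_mul_distrib, prod_const, card_range]
    have hinv : Q ^ (m + 1) * Q⁻¹ ^ (m + 1) = 1 := by
      rw [← mul_pow, mul_inv_cancel₀ hQ, one_pow]
    rw [prod_range_succ', hfactor, ih, prod_Icc_succ_top (by omega)]
    linear_combination (Q ^ (m * m + m) * ∏ j ∈ Icc 1 m, (1 - Q⁻¹ ^ j)) * hinv

theorem card_filter_det_of_sumElim_eq {K κ n : Type*} [Field K] [Fintype K] [DecidableEq K]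
    [Fintype κ] [Fintype n] [DecidableEq n] {m : ℕ} [NeZero m] (e : κ ⊕ Fin m ≃ n)
    {a : κ → n → K} (ha : LinearIndependent K a) {u : K} (hu : u ≠ 0) :
    (#{b : Fin m → n → K | (of (Sum.elim a b ∘ e.symm)).det = u} : ℚ) =
      (Fintype.card K : ℚ) ^ (Fintype.card n * m - 1) *
        ∏ j ∈ Icc 2 m, (1 - (Fintype.card K : ℚ)⁻¹ ^ j) := by
  have hcount := sub_one_mul_card_filter_det_of_sumElim_eq e ha hu
  set q := Fintype.card K
  set N := #{b : Fin m → n → K | (of (Sum.elim a b ∘ e.symm)).det = u}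
  set P := ∏ j ∈ Icc 2 m, (1 - (q : ℚ)⁻¹ ^ j)
  have hq : 1 < q := Fintype.one_lt_card
  have hn : Fintype.card n = Fintype.card κ + m := by
    rw [← Fintype.card_congr e, Fintype.card_sum, Fintype.card_fin]
  have hIcc : ∏ j ∈ Icc 1 m, (1 - (q : ℚ)⁻¹ ^ j) = (1 - (q : ℚ)⁻¹) * P := by
    rw [← mul_prod_Ioc_eq_prod_Icc NeZero.one_le, pow_one,
      show Ioc 1 m = Icc 2 m by ext; simp only [mem_Ioc, mem_Icc]; omega]
  have hcountQ : ((q : ℚ) - 1) * N =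
      q ^ (Fintype.card κ * m) * ∏ i ∈ range m, ((q : ℚ) ^ m - q ^ i) := by
    have hle (i : Fin m) : q ^ (i : ℕ) ≤ q ^ m := Nat.pow_le_pow_right hq.le i.isLt.le
    have := congrArg (Nat.cast (R := ℚ)) hcount
    push_cast [Nat.cast_sub hq.le, Nat.cast_sub (hle _)] at this
    rwa [← Fin.prod_univ_eq_prod_range (fun i => (q : ℚ) ^ m - q ^ i)]
  rw [prod_range_pow_sub_pow (by positivity), hIcc] at hcountQ
  have hnm : Fintype.card n * m ≠ 0 := by
    rw [hn]; exact Nat.mul_ne_zero (by simp [NeZero.ne m]) (NeZero.ne m)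
  have hpow : (q : ℚ) ^ (Fintype.card κ * m) * q ^ (m * m) =
      q ^ (Fintype.card n * m - 1) * q := by
    rw [pow_sub_one_mul hnm, ← pow_add, hn, add_mul]
  have hinv : (q : ℚ) * (q : ℚ)⁻¹ = 1 := mul_inv_cancel₀ (by positivity)
  have hq1 : (q : ℚ) - 1 ≠ 0 := sub_ne_zero.mpr (by exact_mod_cast hq.ne')
  apply mul_left_cancel₀ hq1
  rw [hcountQ, ← mul_assoc, hpow]
  linear_combination (-((q : ℚ) ^ (Fintype.card n * m - 1) * P)) * hinv

theorem Matrix.of_dite_eq_transpose_of_sumElim {K : Type*} {d m : ℕ} (hmd : m ≤ d)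
    (a : Fin (d - m) → Fin d → K) (b : Fin m → Fin d → K) :
    Matrix.of (fun i (j : Fin d) =>
        if h : (j : ℕ) < d - m then a ⟨j, h⟩ i
        else b ⟨(j : ℕ) - (d - m), by have := j.isLt; omega⟩ i) =
      (of (Sum.elim a b ∘
        (finSumFinEquiv.trans (finCongr (Nat.sub_add_cancel hmd))).symm))ᵀ := by
  ext i j
  simp only [transpose_apply, of_apply, Function.comp_apply, Equiv.symm_trans_apply,
    finCongr_symm, finCongr_apply]
  split_ifs with h
  · rw [show Fin.cast _ j = Fin.castAdd m ⟨j, h⟩ from Fin.ext rfl,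
      finSumFinEquiv_symm_apply_castAdd]
    rfl
  · rw [show Fin.cast _ j = Fin.natAdd (d - m) ⟨j - (d - m), by omega⟩ by ext; simp; omega,
      finSumFinEquiv_symm_apply_natAdd]
    rfl

/-- for `q` prime, fixed linearly independent `a₁,…,a_{d-m}` in `(ℤ/qℤ)^d`
and a unit `λ`, the number of `m`-tuples `b` with `det(a₁,…,a_{d-m},b₁,…,b_m) = λ`
equals `q^{dm-1} ∏_{j=2}^m (1 - q^{-j})`. -/
theorem stmt3 (q : ℕ) [Fact (Nat.Prime q)] (d m : ℕ) (hm1 : 1 ≤ m)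
    (hm2 : m ≤ d - 1) (lam : ZMod q) (hlam : IsUnit lam)
    (a : Fin (d - m) → Fin d → ZMod q) (ha : LinearIndependent (ZMod q) a) :
    ((Finset.univ.filter (fun b : Fin m → Fin d → ZMod q =>
        Matrix.det (Matrix.of fun i (j : Fin d) =>
          if h : (j : ℕ) < d - m then a ⟨j, h⟩ i
          else b ⟨(j : ℕ) - (d - m), by have := j.isLt; omega⟩ i) = lam)).card : ℚ)
      = (q : ℚ) ^ (d * m - 1) * ∏ j ∈ Finset.Icc 2 m, (1 - ((q : ℚ))⁻¹ ^ j) := by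
  have : NeZero m := ⟨by omega⟩
  simp_rw [of_dite_eq_transpose_of_sumElim (by omega : m ≤ d) a, det_transpose]
  rw [card_filter_det_of_sumElim_eq _ ha hlam.ne_zero, ZMod.card, Fintype.card_fin]
end

section
/- Let 𝔽 be a finite field with q elements and λ ∈ 𝔽 with λ ≠ 0 and λ ≠ 1. Fix c, d, c', d' ∈ 𝔽 with (c,d) ≠ (c',d') and, if λ = −1, additionally (c,d) ≠ (d',c'). Then the number of pairs (x,y) ∈ 𝔽² satisfying both cross-ratio equations [x,y,c,d] = λ and [x,y,c',d'] = λ (where all expressions are defined) is at most 4. -/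
open Polynomial

lemma aux_conic {F : Type*} [Field F] [Fintype F] [DecidableEq F]
    (t A B E A' B' E' : F) (ht : t ≠ 0)
    (hirr1 : A * B ≠ t * E) (hirr2 : A' * B' ≠ t * E')
    (hne : ¬(A = A' ∧ B = B' ∧ E = E')) :
    (Finset.univ.filter (fun xy : F × F =>
      t * (xy.1 * xy.2) + A * xy.1 + B * xy.2 + E = 0 ∧
      t * (xy.1 * xy.2) + A' * xy.1 + B' * xy.2 + E' = 0)).card ≤ 2 := by
  classical
  set P : F[X] := C (t * (A - A')) * X ^ 2 + C (t * E + A * B' - (t * E' + A' * B)) * X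
      + C (B' * E - B * E') with hP
  -- the coefficients of P are not all zero
  have hcoe : ¬(t * (A - A') = 0 ∧ t * E + A * B' - (t * E' + A' * B) = 0
      ∧ B' * E - B * E' = 0) := by
    rintro ⟨hp2, hp1, hp0⟩
    have hAA : A = A' := by
      rcases mul_eq_zero.mp hp2 with h | h
      · exact absurd h ht
      · exact sub_eq_zero.mp h
    subst hAA
    by_cases hBB : B = B'
    · subst hBB
      refine hne ⟨rfl, rfl, ?_⟩
      have h' : t * (E - E') = 0 := by linear_combination hp1
      rcases mul_eq_zero.mp h' with h | h
      · exact absurd h ht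
      · exact sub_eq_zero.mp h
    · by_cases hB0 : B = 0
      · have hB' : B' ≠ 0 := fun h => hBB (hB0.trans h.symm)
        have hE0 : E = 0 := by
          have h : B' * E = 0 := by linear_combination hp0 + E' * hB0
          exact (mul_eq_zero.mp h).resolve_left hB'
        exact hirr2 (by linear_combination hp1 - t * hE0 + A * hB0)
      · have key : (B - B') * (t * E - A * B) = 0 := by
          linear_combination B * hp1 - t * hp0
        rcases mul_eq_zero.mp key with h | h
        · exact hBB (sub_eq_zero.mp h)
        · exact hirr1 (sub_eq_zero.mp h).symm
  have hPne : P ≠ 0 := by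
    intro h
    have hco : ∀ n, P.coeff n = 0 := fun n => by rw [h, Polynomial.coeff_zero]
    have e2 := hco 2
    have e1 := hco 1
    have e0 := hco 0
    simp only [hP, coeff_add, coeff_C_mul, coeff_X_pow, coeff_X, coeff_C] at e2 e1 e0
    norm_num at e2 e1 e0
    exact hcoe ⟨mul_eq_zero.mpr e2, e1, e0⟩
  -- every solution has x-coordinate a root of P, and y is determined by x
  have hmain : ∀ xy : F × F,
      (t * (xy.1 * xy.2) + A * xy.1 + B * xy.2 + E = 0 ∧
       t * (xy.1 * xy.2) + A' * xy.1 + B' * xy.2 + E' = 0) →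
      (xy.1 ∈ P.roots.toFinset ∧ t * xy.1 + B ≠ 0 ∧
        xy.2 * (t * xy.1 + B) = -(A * xy.1 + E)) := by
    rintro ⟨x, y⟩ ⟨hq1, hq2⟩
    have htx : t * x + B ≠ 0 := by
      intro h0
      have hAxE : A * x + E = 0 := by linear_combination hq1 - y * h0
      refine hirr1 ?_
      linear_combination A * h0 - t * hAxE
    have hyx : y * (t * x + B) = -(A * x + E) := by linear_combination hq1
    have hyx' : y * (t * x + B') = -(A' * x + E') := by linear_combination hq2
    have hroot : P.IsRoot x := by
      have hQ : (t * x + B') * (A * x + E) = (t * x + B) * (A' * x + E') := by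
        linear_combination (t * x + B') * hyx - (t * x + B) * hyx' 
      simp only [hP, IsRoot, eval_add, eval_mul, eval_pow, eval_C, eval_X]
      linear_combination hQ
    exact ⟨Multiset.mem_toFinset.mpr ((Polynomial.mem_roots hPne).mpr hroot),
      htx, hyx⟩
  calc (Finset.univ.filter _).card ≤ P.roots.toFinset.card := by
        apply Finset.card_le_card_of_injOn (fun xy => xy.1)
        · intro xy hxy
          exact (hmain xy (by simpa using hxy)).1
        · intro p hp q hq hfst
          obtain ⟨_, hp2, hp3⟩ := hmain p (by simpa using hp)
          obtain ⟨_, hq2, hq3⟩ := hmain q (by simpa using hq)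
          have hfst' : p.1 = q.1 := hfst
          have : p.2 = q.2 := by
            apply mul_right_cancel₀ hp2
            rw [hp3, hfst', hq3]
          exact Prod.ext hfst' this
    _ ≤ P.roots.card := P.roots.toFinset_card_le
    _ ≤ P.natDegree := P.card_roots'
    _ ≤ 2 := natDegree_quadratic_le



/-- for `λ ≠ 0, 1` and `(c,d) ≠ (c',d')` (and `(c,d) ≠ (d',c')` when
`λ = -1`), the number of pairs `(x,y)` in a finite field satisfying both
cross-ratio equations `[x,y,c,d] = λ` and `[x,y,c',d'] = λ` is at most 4. -/
theorem stmt5 {F : Type*} [Field F] [Fintype F] [DecidableEq F]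
    (lam : F) (h0 : lam ≠ 0) (h1 : lam ≠ 1)
    (c d c' d' : F) (hne : (c, d) ≠ (c', d'))
    (hneg : lam = -1 → (c, d) ≠ (d', c')) :
    (Finset.univ.filter (fun xy : F × F =>
      (xy.1 - d) * (xy.2 - c) ≠ 0 ∧ (xy.1 - d') * (xy.2 - c') ≠ 0 ∧
      (xy.1 - c) * (xy.2 - d) = lam * ((xy.1 - d) * (xy.2 - c)) ∧
      (xy.1 - c') * (xy.2 - d') = lam * ((xy.1 - d') * (xy.2 - c')))).card ≤ 4 := by
  classical
  by_cases hcd : c = d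
  · have hempt : (Finset.univ.filter (fun xy : F × F =>
      (xy.1 - d) * (xy.2 - c) ≠ 0 ∧ (xy.1 - d') * (xy.2 - c') ≠ 0 ∧
      (xy.1 - c) * (xy.2 - d) = lam * ((xy.1 - d) * (xy.2 - c)) ∧
      (xy.1 - c') * (xy.2 - d') = lam * ((xy.1 - d') * (xy.2 - c')))) = ∅ := by
      rw [Finset.filter_eq_empty_iff]
      rintro ⟨x, y⟩ - ⟨hn1, hn2, he1, he2⟩
      subst hcd
      have hm : (1 - lam) * ((x - c) * (y - c)) = 0 := by linear_combination he1
      rcases mul_eq_zero.mp hm with h | h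
      · exact h1 (by linear_combination -h)
      · exact hn1 h
    rw [hempt]; norm_num
  by_cases hcd' : c' = d'
  · have hempt : (Finset.univ.filter (fun xy : F × F =>
      (xy.1 - d) * (xy.2 - c) ≠ 0 ∧ (xy.1 - d') * (xy.2 - c') ≠ 0 ∧
      (xy.1 - c) * (xy.2 - d) = lam * ((xy.1 - d) * (xy.2 - c)) ∧
      (xy.1 - c') * (xy.2 - d') = lam * ((xy.1 - d') * (xy.2 - c')))) = ∅ := by
      rw [Finset.filter_eq_empty_iff]
      rintro ⟨x, y⟩ - ⟨hn1, hn2, he1, he2⟩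
      subst hcd'
      have hm : (1 - lam) * ((x - c') * (y - c')) = 0 := by linear_combination he2
      rcases mul_eq_zero.mp hm with h | h
      · exact h1 (by linear_combination -h)
      · exact hn2 h
    rw [hempt]; norm_num
  have ht : (1 : F) - lam ≠ 0 := sub_ne_zero.mpr (Ne.symm h1)
  have hirr1 : (lam * c - d) * (lam * d - c) ≠ (1 - lam) * ((1 - lam) * (c * d)) := by
    intro h
    have hm : lam * (c - d) ^ 2 = 0 := by linear_combination -h
    rcases mul_eq_zero.mp hm with h' | h'
    · exact h0 h'
    · exact hcd (sub_eq_zero.mp (sq_eq_zero_iff.mp h'))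
  have hirr2 : (lam * c' - d') * (lam * d' - c') ≠ (1 - lam) * ((1 - lam) * (c' * d')) := by
    intro h
    have hm : lam * (c' - d') ^ 2 = 0 := by linear_combination -h
    rcases mul_eq_zero.mp hm with h' | h'
    · exact h0 h'
    · exact hcd' (sub_eq_zero.mp (sq_eq_zero_iff.mp h'))
  have hneq : ¬(lam * c - d = lam * c' - d' ∧ lam * d - c = lam * d' - c' ∧
      (1 - lam) * (c * d) = (1 - lam) * (c' * d')) := by
    rintro ⟨hA, hB, hE⟩
    have hp : c * d = c' * d' := mul_left_cancel₀ ht hE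
    have hsq : (lam ^ 2 - 1) * (c - c') = 0 := by linear_combination lam * hA + hB
    by_cases hcc : c = c'
    · have hdd : d = d' := by linear_combination lam * hcc - hA
      exact hne (Prod.ext hcc hdd)
    · have hl2 : lam ^ 2 - 1 = 0 := by
        rcases mul_eq_zero.mp hsq with h | h
        · exact h
        · exact absurd (sub_eq_zero.mp h) hcc
      have hfac : (lam - 1) * (lam + 1) = 0 := by linear_combination hl2
      rcases mul_eq_zero.mp hfac with h | h
      · exact h1 (by linear_combination h)
      · have hlam : lam = -1 := by linear_combination h
        have hneg' := hneg hlam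
        have hsum : c + d = c' + d' := by
          rw [hlam] at hA; linear_combination -hA
        have hkey : (c - c') * (c - d') = 0 := by linear_combination c * hsum - hp
        rcases mul_eq_zero.mp hkey with h' | h'
        · exact hcc (sub_eq_zero.mp h')
        · have hcd2 : c = d' := sub_eq_zero.mp h'
          have hdc : d = c' := by linear_combination hsum - hcd2
          exact hneg' (Prod.ext hcd2 hdc)
  refine le_trans (le_trans (Finset.card_le_card ?_)
    (aux_conic (1 - lam) (lam * c - d) (lam * d - c) ((1 - lam) * (c * d))
      (lam * c' - d') (lam * d' - c') ((1 - lam) * (c' * d')) ht hirr1 hirr2 hneq))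
    (by norm_num)
  intro xy hxy
  simp only [Finset.mem_filter, Finset.mem_univ, true_and] at hxy ⊢
  obtain ⟨hn1, hn2, he1, he2⟩ := hxy
  exact ⟨by linear_combination he1, by linear_combination he2⟩
end

section
/- Let G be a finite group with no non-trivial one-dimensional complex representations (i.e. the abelianization of G is trivial), acting transitively on a finite set X. Let M : X × X → ℂ be a G-invariant Hermitian kernel, i.e. M(g·a,g·b) = M(a,b). Then every eigenspace of M on which G acts non-trivially has dimension at least the minimal dimension of a non-trivial irreducible complex representation of G. -/
/-!
`M` commutes with the permutation action of `G` on `X → ℂ`, so each eigenspace `E` is a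
subrepresentation. By Maschke's theorem the subrepresentations form a complemented modular lattice,
atomic by finite-dimensionality. If `G` moves a vector of `E`, a complement of the invariant part of
`E` inside `E` is nonzero and contains an atom, i.e. an irreducible subrepresentation on which `G`
acts nontrivially; its dimension is at least `k` and at most `dim E`.
-/

open Module Representation

theorem exists_isAtom_le_not_le {α : Type*} [Lattice α] [BoundedOrder α] [IsModularLattice α]
    [ComplementedLattice α] [IsAtomic α] {a b : α} (h : ¬a ≤ b) :
    ∃ c, IsAtom c ∧ c ≤ a ∧ ¬c ≤ b := by
  obtain ⟨⟨e, hea⟩, hcompl⟩ := exists_isCompl (⟨a ⊓ b, inf_le_left⟩ : Set.Iic a)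
  have hsup : a ⊓ b ⊔ e = a := congrArg Subtype.val hcompl.sup_eq_top
  have hinf : a ⊓ b ⊓ e = ⊥ := congrArg Subtype.val hcompl.inf_eq_bot
  obtain rfl | ⟨c, hc, hce⟩ := eq_bot_or_exists_atom_le e
  · rw [sup_bot_eq] at hsup
    exact absurd (hsup ▸ inf_le_right) h
  refine ⟨c, hc, hce.trans hea, fun hcb => hc.1 (eq_bot_iff.2 ?_)⟩
  exact hinf ▸ le_inf (le_inf (hce.trans hea) hcb) hce

namespace Subrepresentation

section Ring

variable {k G V : Type*} [Ring k] [Monoid G] [AddCommGroup V] [Module k V]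
  {ρ : Representation k G V}

instance : IsModularLattice (Subrepresentation ρ) where
  sup_inf_le_assoc_of_le y := sup_inf_le_assoc_of_le (α := Submodule k V) y.toSubmodule

instance [WellFoundedLT (Submodule k V)] : WellFoundedLT (Subrepresentation ρ) :=
  StrictMono.wellFoundedLT (f := toSubmodule) fun _ _ h => h

end Ring

variable {k G V : Type*} [Field k] [Group G] [AddCommGroup V] [Module k V]

noncomputable def invariants (ρ : Representation k G V) : Subrepresentation ρ where
  toSubmodule := ρ.invariants
  apply_mem_toSubmodule g v hv := by rwa [(mem_invariants ρ v).1 hv g]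

def eigenspace {ρ : Representation k G V} {T : End k V} (hT : ∀ g, Commute T (ρ g)) (μ : k) :
    Subrepresentation ρ where
  toSubmodule := T.eigenspace μ
  apply_mem_toSubmodule g v hv := by
    rw [End.mem_eigenspace_iff] at hv ⊢
    rw [← End.mul_apply, (hT g).eq, End.mul_apply, hv, map_smul]

theorem _root_.Representation.IntertwiningMap.range_le_invariants {W : Type*} [AddCommGroup W]
    [Module k W] {ρ : Representation k G V} {σ : Representation k G W} (f : IntertwiningMap ρ σ)
    (h : ∀ g, ρ g = 1) : f.range ≤ invariants σ := by
  rintro _ ⟨v, rfl⟩ g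
  simpa [h] using (IntertwiningMap.isIntertwining _ _ f g v).symm

theorem exists_intertwiningMap_fin_range_eq {ρ : Representation k G V} (σ : Subrepresentation ρ)
    [FiniteDimensional k σ.toSubmodule] :
    ∃ (ρ' : Representation k G (Fin (finrank k σ.toSubmodule) → k)) (f : IntertwiningMap ρ' ρ),
      Function.Injective f ∧ f.range = σ := by
  let e := (finBasis k σ.toSubmodule).equivFun
  refine ⟨e.conjRingEquiv.toMonoidHom.comp σ.toRepresentation,
    ⟨σ.toSubmodule.subtype ∘ₗ e.symm.toLinearMap, fun g => ?_⟩, ?_, ?_⟩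
  · ext w
    simp [toRepresentation]
  · exact Subtype.val_injective.comp e.symm.injective
  · ext v
    simp

end Subrepresentation

namespace Representation

variable {k G V : Type*} [Field k] [Monoid G] [AddCommGroup V] [Module k V]
  {ρ : Representation k G V}

def IntertwiningMap.subrepresentationOrderIsoIicRange {W : Type*} [AddCommGroup W] [Module k W]
    {σ : Representation k G W} (f : IntertwiningMap ρ σ) (hf : Function.Injective f) :
    Subrepresentation ρ ≃o Set.Iic f.range where
  toFun τ := ⟨⟨τ.toSubmodule.map f.toLinearMap, by
      rintro g _ ⟨v, hv, rfl⟩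
      exact ⟨ρ g v, τ.apply_mem_toSubmodule g hv, isIntertwining _ _ f g v⟩⟩,
    LinearMap.map_le_range⟩
  invFun τ := ⟨τ.1.toSubmodule.comap f.toLinearMap, fun g v hv => by
      simpa [Submodule.mem_comap, isIntertwining _ _ f] using τ.1.apply_mem_toSubmodule g hv⟩
  left_inv τ := Subrepresentation.ext <| Submodule.comap_map_eq_of_injective hf _
  right_inv τ := Subtype.ext <| Subrepresentation.ext <| Submodule.map_comap_eq_of_le τ.2
  map_rel_iff' := Submodule.map_le_map_iff_of_injective hf _ _

theorem IntertwiningMap.isIrreducible_iff_isAtom_range {W : Type*} [AddCommGroup W] [Module k W]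
    {σ : Representation k G W} (f : IntertwiningMap ρ σ) (hf : Function.Injective f) :
    IsIrreducible ρ ↔ IsAtom f.range :=
  (f.subrepresentationOrderIsoIicRange hf).isSimpleOrder_iff.trans Set.isSimpleOrder_Iic_iff_isAtom

theorem IsIrreducible.eq_bot_or_eq_top_of_forall_mem [IsIrreducible ρ] (W : Submodule k V)
    (hW : ∀ (g : G) (v : V), v ∈ W → ρ g v ∈ W) : W = ⊥ ∨ W = ⊤ :=
  (eq_bot_or_eq_top (⟨W, hW⟩ : Subrepresentation ρ)).imp (congrArg Subrepresentation.toSubmodule)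
    (congrArg Subrepresentation.toSubmodule)

def ofMulActionFun (k G X : Type*) [CommSemiring k] [Group G] [MulAction G X] :
    Representation k G (X → k) where
  toFun g := LinearMap.funLeft k k (g⁻¹ • ·)
  map_one' := by ext; simp
  map_mul' g h := by ext; simp [mul_smul]

end Representation

theorem Matrix.commute_mulVecLin_ofMulActionFun {k G X : Type*} [CommSemiring k] [Group G]
    [MulAction G X] [Fintype X] {M : Matrix X X k}
    (hM : ∀ (g : G) (a b : X), M (g • a) (g • b) = M a b) (g : G) :
    Commute M.mulVecLin (ofMulActionFun k G X g) := by
  refine LinearMap.ext fun f => funext fun x => ?_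
  simp only [End.mul_apply, mulVecLin_apply, ofMulActionFun, MonoidHom.coe_mk, OneHom.coe_mk,
    LinearMap.funLeft_apply, mulVec, dotProduct]
  exact Fintype.sum_equiv (MulAction.toPerm g⁻¹) _ _ fun y => by
    rw [MulAction.toPerm_apply, hM]

theorem stmt9_general {G X : Type*} [Group G] [Finite G] [Fintype X]
    [MulAction G X]
    (M : Matrix X X ℂ)
    (hinv : ∀ (g : G) (a b : X), M (g • a) (g • b) = M a b)
    (μ : ℂ)
    (hact : ∃ f ∈ Module.End.eigenspace (Matrix.mulVecLin M) μ,
      ∃ g : G, (fun x => f (g⁻¹ • x)) ≠ f)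
    (k : ℕ)
    (hk : ∀ (V : Type) [AddCommGroup V] [Module ℂ V]
      (ρ : Representation ℂ G V),
      (∀ W : Submodule ℂ V, (∀ (g : G) (v : V), v ∈ W → ρ g v ∈ W) → W = ⊥ ∨ W = ⊤) →
      (∃ g : G, ρ g ≠ 1) → k ≤ Module.finrank ℂ V) :
    k ≤ Module.finrank ℂ (Module.End.eigenspace (Matrix.mulVecLin M) μ) := by
  let E := Subrepresentation.eigenspace (Matrix.commute_mulVecLin_ofMulActionFun hinv) μ
  have hE : ¬E ≤ Subrepresentation.invariants (ofMulActionFun ℂ G X) := by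
    obtain ⟨f, hf, g, hg⟩ := hact
    exact fun h => hg (h hf g)
  obtain ⟨σ, hσ, hσE, hσinv⟩ := exists_isAtom_le_not_le hE
  -- `hk` only speaks about spaces in `Type`, so `σ` is replaced by an isomorphic copy on `Fin n → ℂ`.
  obtain ⟨ρ, f, hf, hfσ⟩ := σ.exists_intertwiningMap_fin_range_eq
  have : IsIrreducible ρ := (f.isIrreducible_iff_isAtom_range hf).2 (by rwa [hfσ])
  have hnt : ∃ g, ρ g ≠ 1 := by
    by_contra! h
    exact hσinv (hfσ ▸ f.range_le_invariants h)
  calc k ≤ finrank ℂ (Fin _ → ℂ) := hk _ ρ IsIrreducible.eq_bot_or_eq_top_of_forall_mem hnt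
    _ = finrank ℂ σ.toSubmodule := finrank_fin_fun ℂ
    _ ≤ _ := Submodule.finrank_mono hσE

/-- if a finite group `G` with no non-trivial one-dimensional complex
representations acts transitively on a finite set `X` and `M` is a `G`-invariant
Hermitian kernel, then every eigenspace of `M` on which `G` acts non-trivially has
dimension at least the minimal dimension of a non-trivial irreducible complex
representation of `G`. -/
theorem stmt9 {G X : Type*} [Group G] [Finite G] [Fintype X] [DecidableEq X]
    [MulAction G X] [MulAction.IsPretransitive G X]
    (hab : ∀ φ : G →* ℂˣ, φ = 1)
    (M : Matrix X X ℂ) (hherm : M.IsHermitian)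
    (hinv : ∀ (g : G) (a b : X), M (g • a) (g • b) = M a b)
    (μ : ℂ)
    (hact : ∃ f ∈ Module.End.eigenspace (Matrix.mulVecLin M) μ,
      ∃ g : G, (fun x => f (g⁻¹ • x)) ≠ f)
    (k : ℕ)
    (hk : ∀ (V : Type) [AddCommGroup V] [Module ℂ V]
      (ρ : Representation ℂ G V),
      (∀ W : Submodule ℂ V, (∀ (g : G) (v : V), v ∈ W → ρ g v ∈ W) → W = ⊥ ∨ W = ⊤) →
      (∃ g : G, ρ g ≠ 1) → k ≤ Module.finrank ℂ V) :
    k ≤ Module.finrank ℂ (Module.End.eigenspace (Matrix.mulVecLin M) μ) :=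
  stmt9_general M hinv μ hact k hk
end

section
/- Let p be an odd prime. Every non-trivial complex irreducible representation of SL₂(𝔽_p) has dimension at least (p−1)/2. -/
/-!
Let `u` be the upper unitriangular matrix with off-diagonal entry `1`. The conjugates of the
powers of `u` generate `SL₂(𝔽_p)`, so `ρ u ≠ 1` for a non-trivial `ρ`. As `ρ u ^ p = 1`, the
endomorphism `ρ u` is diagonalizable, hence has an eigenvalue `ζ ≠ 1`, a primitive `p`-th root
of unity. Conjugating `u` by `diag(a, a⁻¹)` gives `u ^ (a²)`, so every `ζ ^ (a²)` with `a ≠ 0` is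
again an eigenvalue: at least `(p - 1) / 2` distinct ones. An irreducible representation of a
finite group is finite-dimensional, so these eigenvalues bound its dimension.
-/

open Matrix Polynomial Finset MatrixGroups

namespace Matrix.SpecialLinearGroup

section CommRing

variable {ι R : Type*} [Fintype ι] [DecidableEq ι] [CommRing R] {i j : ι}

lemma transvection_pow (hij : i ≠ j) (b : R) (n : ℕ) :
    transvection hij b ^ n = transvection hij (n * b) := by
  induction n with
  | zero => simp
  | succ n ih => rw [pow_succ, ih, ← transvection_add]; push_cast; ring_nf

lemma transvection_eq_one_pow_val {p : ℕ} [NeZero p] (hij : i ≠ j) (c : ZMod p) :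
    transvection hij c = transvection hij 1 ^ c.val := by
  rw [transvection_pow, ZMod.natCast_zmod_val, mul_one]

lemma transvection_one_pow_char (p : ℕ) [NeZero p] (hij : i ≠ j) :
    transvection hij (1 : ZMod p) ^ p = 1 := by
  rw [transvection_pow, ZMod.natCast_self, zero_mul, transvection_coeff_zero]

end CommRing

variable {F : Type*} [Field F]

lemma coe_transvection_zero_one (b : F) :
    ((transvection zero_ne_one b : SL(2, F)) : Matrix (Fin 2) (Fin 2) F) = !![1, b; 0, 1] := by
  ext i j; fin_cases i <;> fin_cases j <;> simp [transvection_coe]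

lemma coe_transvection_one_zero (b : F) :
    ((transvection one_ne_zero b : SL(2, F)) : Matrix (Fin 2) (Fin 2) F) = !![1, 0; b, 1] := by
  ext i j; fin_cases i <;> fin_cases j <;> simp [transvection_coe]

lemma diag2_mul_transvection_mul_inv {a : F} (ha : a ≠ 0) (b : F) :
    diag2 a ha * transvection zero_ne_one b * (diag2 a ha)⁻¹ =
      transvection zero_ne_one (a ^ 2 * b) := by
  refine Subtype.ext ?_
  simp [diag2_inv, diag2_coe', coe_transvection_zero_one, ha]
  ring

lemma transvection_one_zero_eq_conj (c : F) :
    ∃ w : SL(2, F), transvection one_ne_zero c = w * transvection zero_ne_one (-c) * w⁻¹ := by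
  obtain ⟨w, hw⟩ : ∃ w : SL(2, F), (w : Matrix (Fin 2) (Fin 2) F) = !![0, -1; 1, 0] :=
    ⟨⟨_, by simp [det_fin_two_of]⟩, rfl⟩
  refine ⟨w, Subtype.ext ?_⟩
  simp [coe_transvection_zero_one, coe_transvection_one_zero, coe_inv, adjugate_fin_two, hw]

lemma SL2.eq_one_of_map_transvection {M : Type*} [Monoid M] (φ : SL(2, F) →* M)
    (h : ∀ b, φ (transvection zero_ne_one b) = 1) (A : SL(2, F)) : φ A = 1 := by
  induction A using SL2.transvection_induction with
  | htransvec i j hij c =>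
    fin_cases i <;> fin_cases j
    all_goals first | exact absurd rfl hij | skip
    · exact h c
    · obtain ⟨w, hw⟩ := transvection_one_zero_eq_conj c
      rw [hw, map_mul, map_mul, h, mul_one, ← map_mul, mul_inv_cancel, map_one]
  | hmul A B hA hB => rw [map_mul, hA, hB, one_mul]

lemma SL2.eq_one_of_map_transvection_one {p : ℕ} [Fact p.Prime] {M : Type*} [Monoid M]
    (φ : SL(2, ZMod p) →* M) (h : φ (transvection zero_ne_one 1) = 1) (A : SL(2, ZMod p)) :
    φ A = 1 :=
  SL2.eq_one_of_map_transvection φ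
    (fun b ↦ by rw [transvection_eq_one_pow_val, map_pow, h, one_pow]) A

end Matrix.SpecialLinearGroup

lemma card_sub_one_le_two_mul_card_image_of_sq_eq {F β : Type*} [Field F] [Fintype F]
    [DecidableEq F] [DecidableEq β] (g : F → β) (hg : ∀ a b, g a = g b → a ^ 2 = b ^ 2) :
    Fintype.card F - 1 ≤ 2 * #((univ.erase 0).image g) := by
  rw [← card_univ, ← card_erase_of_mem (mem_univ 0)]
  refine card_le_mul_card_image _ 2 fun b hb ↦ ?_
  obtain ⟨a, -, rfl⟩ := mem_image.mp hb
  calc #{x ∈ univ.erase 0 | g x = g a} ≤ #{a, -a} := card_le_card fun x hx ↦ by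
        simpa using sq_eq_sq_iff_eq_or_eq_neg.mp (hg x a (mem_filter.mp hx).2)
    _ ≤ 2 := card_le_two

namespace Module.End

variable {K V : Type*} [Field K] [AddCommGroup V] [Module K V]

lemma HasEigenvalue.pow_eq_one {f : End K V} {μ : K} (hμ : f.HasEigenvalue μ) {n : ℕ}
    (hf : f ^ n = 1) : μ ^ n = 1 := by
  obtain ⟨v, hv⟩ := (hμ.pow n).exists_hasEigenvector
  have : v = μ ^ n • v := by simpa [hf] using hv.apply_eq_smul
  exact smul_left_injective K hv.2 (this.symm.trans (one_smul K v).symm)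

lemma exists_hasEigenvalue_ne_one_of_pow_eq_one [IsAlgClosed K] [FiniteDimensional K V]
    {f : End K V} {n : ℕ} (hn : (n : K) ≠ 0) (hfn : f ^ n = 1) (hf : f ≠ 1) :
    ∃ μ, f.HasEigenvalue μ ∧ μ ≠ 1 := by
  have hss : f.IsSemisimple := isSemisimple_of_squarefree_aeval_eq_zero
    (X_pow_sub_one_separable_iff.mpr hn).squarefree (by simp [hfn])
  by_contra! h
  have htop : f.eigenspace 1 = ⊤ := by
    rw [← hss.iSup_eigenspace_eq_top]
    refine le_antisymm (le_iSup _ 1) (iSup_le fun μ ↦ ?_)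
    rcases eq_or_ne μ 1 with rfl | hμ
    · exact le_rfl
    · simp [not_not.mp (hasEigenvalue_iff.not.mp fun he ↦ hμ (h μ he))]
  exact hf (LinearMap.ext fun v ↦ by
    simpa using mem_eigenspace_iff.mp (htop ▸ Submodule.mem_top : v ∈ f.eigenspace 1))

lemma card_le_finrank_of_forall_hasEigenvalue [FiniteDimensional K V] (f : End K V)
    (s : Finset K) (hs : ∀ μ ∈ s, f.HasEigenvalue μ) : #s ≤ Module.finrank K V := by
  choose v hv using fun μ : s ↦ (hs μ μ.2).exists_hasEigenvector
  simpa using (f.eigenvectors_linearIndependent' (fun μ : s ↦ (μ : K)) Subtype.val_injective v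
    hv).fintype_card_le_finrank

lemma div_two_le_finrank_of_hasEigenvalue_pow_sq {p : ℕ} [Fact p.Prime] [FiniteDimensional K V]
    {f : End K V} {ζ : K} (hζ : IsPrimitiveRoot ζ p)
    (h : ∀ a : ZMod p, a ≠ 0 → f.HasEigenvalue (ζ ^ (a ^ 2).val)) :
    (p - 1) / 2 ≤ Module.finrank K V := by
  classical
  have hcard := card_sub_one_le_two_mul_card_image_of_sq_eq (fun a : ZMod p ↦ ζ ^ (a ^ 2).val)
    fun a b hab ↦ ZMod.val_injective p (hζ.pow_inj (ZMod.val_lt _) (ZMod.val_lt _) hab)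
  have hle := f.card_le_finrank_of_forall_hasEigenvalue
      (((univ : Finset (ZMod p)).erase 0).image fun a ↦ ζ ^ (a ^ 2).val) fun μ hμ ↦ by
    obtain ⟨a, ha, rfl⟩ := mem_image.mp hμ
    exact h a (ne_of_mem_erase ha)
  rw [ZMod.card] at hcard
  omega

end Module.End

namespace Representation

variable {G K V : Type*} [AddCommGroup V]

lemma hasEigenvalue_conj [CommRing K] [Module K V] [Group G] (ρ : Representation K G V)
    (g h : G) {μ : K} (hμ : Module.End.HasEigenvalue (ρ h) μ) :
    Module.End.HasEigenvalue (ρ (g * h * g⁻¹)) μ := by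
  obtain ⟨v, hv⟩ := hμ.exists_hasEigenvector
  refine Module.End.hasEigenvalue_of_hasEigenvector (x := ρ g v) ⟨?_, ?_⟩
  · rw [Module.End.mem_eigenspace_iff, map_mul, map_mul, Module.End.mul_apply,
      Module.End.mul_apply, inv_self_apply, hv.apply_eq_smul, map_smul]
  · exact fun h0 ↦ hv.2 (by simpa [h0] using (ρ.inv_self_apply g v).symm)

lemma finiteDimensional_of_forall_invariant [Field K] [Module K V] [Monoid G] [Finite G]
    [Nontrivial V] (ρ : Representation K G V)
    (hirr : ∀ W : Submodule K V, (∀ (g : G) (v : V), v ∈ W → ρ g v ∈ W) → W = ⊥ ∨ W = ⊤) :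
    FiniteDimensional K V := by
  obtain ⟨w, hw⟩ := exists_ne (0 : V)
  set W := Submodule.span K (Set.range fun g ↦ ρ g w)
  have hW : ∀ (g : G) (v : V), v ∈ W → ρ g v ∈ W := by
    intro g v hv
    induction hv using Submodule.span_induction with
    | mem x hx =>
      obtain ⟨h, rfl⟩ := hx
      exact Submodule.subset_span ⟨g * h, by simp⟩
    | zero => simp
    | add x y _ _ hx hy => simpa using add_mem hx hy
    | smul c x _ hx => simpa using W.smul_mem c hx
  have hwW : w ∈ W := Submodule.subset_span ⟨1, by simp⟩
  rcases hirr W hW with h | h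
  · exact absurd ((Submodule.mem_bot K).mp (h ▸ hwW)) hw
  · have : Module.Finite K W := Module.Finite.span_of_finite K (Set.finite_range _)
    rw [h] at this
    exact Module.Finite.equiv Submodule.topEquiv

open Matrix.SpecialLinearGroup in
lemma hasEigenvalue_transvection_pow_sq [CommRing K] [Module K V] {p : ℕ} [Fact p.Prime]
    (ρ : Representation K SL(2, ZMod p) V) {ζ : K}
    (hζ : Module.End.HasEigenvalue (ρ (transvection zero_ne_one 1)) ζ) {a : ZMod p} (ha : a ≠ 0) :
    Module.End.HasEigenvalue (ρ (transvection zero_ne_one 1)) (ζ ^ (a ^ 2).val) := by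
  have h := ρ.hasEigenvalue_conj (diag2 a⁻¹ (inv_ne_zero ha)) (transvection zero_ne_one (a ^ 2))
    (by rw [transvection_eq_one_pow_val, map_pow]; exact hζ.pow _)
  rwa [diag2_mul_transvection_mul_inv, inv_pow, inv_mul_cancel₀ (pow_ne_zero 2 ha)] at h

end Representation

open Matrix.SpecialLinearGroup in
theorem stmt10_general (p : ℕ) [Fact (Nat.Prime p)]
    (V : Type) [AddCommGroup V] [Module ℂ V]
    (ρ : Representation ℂ (Matrix.SpecialLinearGroup (Fin 2) (ZMod p)) V)
    (hirr : ∀ W : Submodule ℂ V,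
      (∀ (g : Matrix.SpecialLinearGroup (Fin 2) (ZMod p)) (v : V), v ∈ W → ρ g v ∈ W) →
      W = ⊥ ∨ W = ⊤)
    (hnt : ∃ g, ρ g ≠ 1) :
    (p - 1) / 2 ≤ Module.finrank ℂ V := by
  obtain ⟨g₀, hg₀⟩ := hnt
  have : Nontrivial V := not_subsingleton_iff_nontrivial.mp fun _ ↦ hg₀ (Subsingleton.elim _ _)
  have := ρ.finiteDimensional_of_forall_invariant hirr
  have hpow : ρ (transvection zero_ne_one 1) ^ p = 1 := by
    rw [← map_pow, transvection_one_pow_char, map_one]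
  have hne : ρ (transvection zero_ne_one 1) ≠ 1 :=
    fun h ↦ hg₀ (SL2.eq_one_of_map_transvection_one ρ h g₀)
  obtain ⟨ζ, hζ, hζ1⟩ := Module.End.exists_hasEigenvalue_ne_one_of_pow_eq_one
    (by exact_mod_cast NeZero.ne p) hpow hne
  have hprim : IsPrimitiveRoot ζ p :=
    orderOf_eq_prime (hζ.pow_eq_one hpow) hζ1 ▸ IsPrimitiveRoot.orderOf ζ
  exact Module.End.div_two_le_finrank_of_hasEigenvalue_pow_sq hprim
    fun a ha ↦ ρ.hasEigenvalue_transvection_pow_sq hζ ha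

/-- Frobenius: for an odd prime `p`, every non-trivial complex
irreducible representation of `SL₂(𝔽_p)` has dimension at least `(p-1)/2`. -/
theorem stmt10 (p : ℕ) [Fact (Nat.Prime p)] (hodd : p ≠ 2)
    (V : Type) [AddCommGroup V] [Module ℂ V]
    (ρ : Representation ℂ (Matrix.SpecialLinearGroup (Fin 2) (ZMod p)) V)
    (hirr : ∀ W : Submodule ℂ V,
      (∀ (g : Matrix.SpecialLinearGroup (Fin 2) (ZMod p)) (v : V), v ∈ W → ρ g v ∈ W) →
      W = ⊥ ∨ W = ⊤)
    (hnt : ∃ g, ρ g ≠ 1) :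
    (p - 1) / 2 ≤ Module.finrank ℂ V :=
  stmt10_general p V ρ hirr hnt
end

section
/- Let q be an odd prime, λ ∈ (ℤ/qℤ)*, and let 𝒜, ℬ ⊆ (ℤ/qℤ)² be arbitrary sets. Let I_λ(𝒜,ℬ) denote the number of pairs ((a₁,a₂),(b₁,b₂)) ∈ 𝒜 × ℬ with a₁b₁ − a₂b₂ = λ. Then |I_λ(𝒜,ℬ) − |𝒜||ℬ|/(q(1−q^{−2}))| ≤ 2·q·(3 log₂ q / q)^{1/4}·√(|𝒜||ℬ|). -/
/-!
For `b ≠ 0` the points `a` with `a₁b₁ - a₂b₂ = λ` form an affine line of `q` points, `b = 0`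
gives no point, and since `λ ≠ 0` two distinct such lines meet in at most one point. So the
degrees `n a = #{b ∈ B | a₁b₁ - a₂b₂ = λ}` have first moment at least `q (|B| - 1)` and
second moment at most `|B| (q + |B| - 1)` over the `q²` points, hence variance at most
`(q + 1) |B|` around `|B| / q`, and Cauchy–Schwarz over `A` gives
`|I_λ - |A||B|/q| ≤ √((q + 1)|A||B|)`. The main term of the statement exceeds `|A||B|/q` by
`|A||B|/(q(q² - 1)) ≤ (2/3) √(|A||B|)`, and `√(q + 1) + 2/3 ≤ 2√q ≤ 2q (3 log₂ q / q)^{1/4}`.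
-/

open Finset

namespace Finset

variable {α β : Type*} (r : α → β → Prop) [∀ a b, Decidable (r a b)]

theorem card_filter_product_eq_sum_card_bipartiteAbove (s : Finset α) (t : Finset β) :
    #{x ∈ s ×ˢ t | r x.1 x.2} = ∑ a ∈ s, #(t.bipartiteAbove r a) := by
  simp only [card_filter, sum_product, bipartiteAbove]

theorem sum_card_bipartiteAbove_sq (s : Finset α) (t : Finset β) :
    ∑ a ∈ s, #(t.bipartiteAbove r a) ^ 2
      = ∑ b ∈ t, ∑ b' ∈ t, #{a ∈ s | r a b ∧ r a b'} := by
  simp only [sq, bipartiteAbove, card_filter, sum_mul_sum, ite_and, ite_mul, one_mul, zero_mul]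
  rw [sum_comm]
  exact sum_congr rfl fun b _ => sum_comm

variable {r} in
theorem sum_card_bipartiteAbove_sq_le [DecidableEq β] {s : Finset α} {t : Finset β} {k : ℕ}
    (hk : ∀ b ∈ t, #(s.bipartiteBelow r b) ≤ k)
    (hpair : ∀ b ∈ t, ∀ b' ∈ t, b ≠ b' → #{a ∈ s | r a b ∧ r a b'} ≤ 1) :
    ∑ a ∈ s, #(t.bipartiteAbove r a) ^ 2 ≤ #t * (k + (#t - 1)) := by
  rw [sum_card_bipartiteAbove_sq, ← smul_eq_mul, ← sum_const]
  refine sum_le_sum fun b hb => ?_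
  rw [← add_sum_erase _ _ hb, ← card_erase_of_mem hb, card_eq_sum_ones (t.erase b)]
  gcongr with b' hb'
  · simpa only [and_self, bipartiteBelow] using hk b hb
  · exact hpair b hb b' (mem_of_mem_erase hb') (ne_of_mem_erase hb').symm

end Finset

theorem abs_sum_sub_card_mul_le_sqrt {ι : Type*} [Fintype ι] (s : Finset ι) (f : ι → ℝ)
    (μ : ℝ) :
    |∑ i ∈ s, f i - #s * μ| ≤ √(#s * ∑ i, (f i - μ) ^ 2) := by
  refine Real.abs_le_sqrt ?_
  calc (∑ i ∈ s, f i - #s * μ) ^ 2 = (∑ i ∈ s, (f i - μ)) ^ 2 := by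
        rw [sum_sub_distrib, sum_const, nsmul_eq_mul]
    _ ≤ (#s : ℝ) * ∑ i ∈ s, (f i - μ) ^ 2 := sq_sum_le_card_mul_sum_sq
    _ ≤ (#s : ℝ) * ∑ i, (f i - μ) ^ 2 := by
        gcongr
        exact subset_univ s

theorem sum_sq_sub_div_le {ι : Type*} [Fintype ι] (f : ι → ℝ) {q m : ℝ} (hq : 0 < q)
    (hm : 0 ≤ m) (hcard : Fintype.card ι = q ^ 2) (h₁ : q * (m - 1) ≤ ∑ i, f i)
    (h₂ : ∑ i, f i ^ 2 ≤ m * (q + (m - 1))) :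
    ∑ i, (f i - m / q) ^ 2 ≤ (q + 1) * m := by
  have hexpand : ∑ i, (f i - m / q) ^ 2 = ∑ i, f i ^ 2 - 2 * (m / q) * ∑ i, f i + m ^ 2 := by
    simp only [sub_sq, sum_add_distrib, sum_sub_distrib, ← sum_mul, ← mul_sum, sum_const,
      card_univ, nsmul_eq_mul, hcard]
    field_simp
  have hcross : 2 * m * (m - 1) ≤ 2 * (m / q) * ∑ i, f i := calc
    2 * m * (m - 1) = 2 * (m / q) * (q * (m - 1)) := by field_simp
    _ ≤ _ := by gcongr
  rw [hexpand]
  linarith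

theorem sqrt_le_mul_rpow_logb {x : ℝ} (hx : 2 ≤ x) :
    √x ≤ x * (3 * Real.logb 2 x / x) ^ (1 / 4 : ℝ) := by
  have hx₀ : 0 < x := by linarith
  have hroot : ((x ^ 2)⁻¹) ^ (1 / 4 : ℝ) = (√x)⁻¹ := by
    rw [Real.inv_rpow (by positivity), ← Real.rpow_natCast, ← Real.rpow_mul hx₀.le,
      Real.sqrt_eq_rpow]
    norm_num
  have hlog : 1 ≤ Real.logb 2 x := by
    rw [Real.le_logb_iff_rpow_le (by norm_num) hx₀]
    simpa using hx
  calc √x = x * ((x ^ 2)⁻¹) ^ (1 / 4 : ℝ) := by rw [hroot, ← div_eq_mul_inv, Real.div_sqrt]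
    _ ≤ x * (3 * Real.logb 2 x / x) ^ (1 / 4 : ℝ) := by
      gcongr
      rw [inv_le_iff_one_le_mul₀ (by positivity)]
      calc (1 : ℝ) ≤ 3 * x * 1 := by linarith
        _ ≤ 3 * x * Real.logb 2 x := by gcongr
        _ = _ := by field_simp

theorem abs_sub_div_mul_one_sub_inv_sq_le {Q P I : ℝ} (hQ : 2 ≤ Q) (hP : 0 ≤ P)
    (hPQ : P ≤ Q ^ 4) (h : |I - P / Q| ≤ √((Q + 1) * P)) :
    |I - P / (Q * (1 - Q⁻¹ ^ 2))| ≤ 2 * √Q * √P := by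
  have hQ₀ : 0 < Q := by linarith
  have hQ₁ : 0 < Q * (Q ^ 2 - 1) := by nlinarith
  have hsplit : P / (Q * (1 - Q⁻¹ ^ 2)) = P / Q + P / (Q * (Q ^ 2 - 1)) := by
    have : Q ^ 2 - 1 ≠ 0 := by nlinarith
    field_simp
    ring
  have hsP : P ≤ Q ^ 2 * √P := by
    have : √P ≤ Q ^ 2 := Real.sqrt_le_iff.2 ⟨by positivity, by linarith⟩
    calc P = √P * √P := (Real.mul_self_sqrt hP).symm
      _ ≤ Q ^ 2 * √P := by gcongr
  have hcorr : P / (Q * (Q ^ 2 - 1)) ≤ 2 / 3 * √P := by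
    rw [div_le_iff₀ hQ₁]
    have : 0 ≤ √P * Q * ((2 * Q + 1) * (Q - 2)) := by
      have := Real.sqrt_nonneg P
      have : 0 ≤ Q - 2 := by linarith
      positivity
    nlinarith
  have hroot : √(Q + 1) + 2 / 3 ≤ 2 * √Q := by
    have hu : √Q ^ 2 = Q := Real.sq_sqrt hQ₀.le
    have hu₁ : 1 ≤ √Q := by nlinarith [Real.sqrt_nonneg Q]
    suffices √(Q + 1) ≤ 2 * √Q - 2 / 3 by linarith
    exact Real.sqrt_le_iff.2 ⟨by linarith, by nlinarith⟩
  rw [hsplit, ← sub_sub]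
  calc |I - P / Q - P / (Q * (Q ^ 2 - 1))|
      ≤ |I - P / Q| + P / (Q * (Q ^ 2 - 1)) := by
        refine (abs_sub _ _).trans_eq ?_
        rw [abs_of_nonneg (div_nonneg hP hQ₁.le)]
    _ ≤ √(Q + 1) * √P + 2 / 3 * √P := by
        rw [← Real.sqrt_mul (by linarith)]
        gcongr
    _ ≤ 2 * √Q * √P := by nlinarith [Real.sqrt_nonneg P]

section Incidence

variable {F : Type*} [Field F] [Fintype F] [DecidableEq F]

abbrev IsIncident (lam : F) (a b : F × F) : Prop := a.1 * b.1 - a.2 * b.2 = lam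

theorem bipartiteBelow_isIncident_zero {lam : F} (hlam : lam ≠ 0) :
    univ.bipartiteBelow (IsIncident lam) 0 = ∅ := by
  ext a; simp [Ne.symm hlam]

theorem card_bipartiteBelow_isIncident (lam : F) {b : F × F} (hb : b ≠ 0) :
    #(univ.bipartiteBelow (IsIncident lam) b) = Fintype.card F := by
  rw [← card_univ]
  obtain ⟨b₁, b₂⟩ := b
  rcases eq_or_ne b₁ 0 with rfl | hb₁
  · have hb₂ : b₂ ≠ 0 := by rintro rfl; simp at hb
    refine card_nbij' Prod.fst (fun x => (x, -(lam / b₂))) (by simp)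
      (fun x _ => by simp [IsIncident, hb₂]) ?_ (fun _ _ => rfl)
    rintro ⟨a₁, a₂⟩ ha
    simp only [mem_coe, mem_bipartiteBelow] at ha
    simp only [Prod.mk.injEq, true_and]
    field_simp
    linear_combination ha.2
  · refine card_nbij' Prod.snd (fun y => ((lam + y * b₂) / b₁, y)) (by simp)
      (fun y _ => by simp; field_simp; ring) ?_ (fun _ _ => rfl)
    rintro ⟨a₁, a₂⟩ ha
    simp only [mem_coe, mem_bipartiteBelow] at ha
    simp only [Prod.mk.injEq, and_true]
    field_simp
    linear_combination -ha.2

theorem card_isIncident_and_isIncident_le_one {lam : F} (hlam : lam ≠ 0) {b b' : F × F}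
    (hne : b ≠ b') : #{a | IsIncident lam a b ∧ IsIncident lam a b'} ≤ 1 := by
  refine card_le_one.2 fun a ha a' ha' => ?_
  simp only [mem_filter, mem_univ, true_and, IsIncident] at ha ha'
  obtain ⟨h₁, h₂⟩ := ha
  obtain ⟨h₃, h₄⟩ := ha'
  -- Parallel lines (vanishing determinant) with the same value `λ ≠ 0` coincide.
  by_cases hdet : b.1 * b'.2 - b.2 * b'.1 = 0
  · refine absurd (Prod.ext ?_ ?_) hne
    · have : lam * (b.1 - b'.1) = 0 := by linear_combination b'.1 * h₁ - b.1 * h₂ - a.2 * hdet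
      simpa [hlam, sub_eq_zero] using this
    · have : lam * (b.2 - b'.2) = 0 := by linear_combination b'.2 * h₁ - b.2 * h₂ - a.1 * hdet
      simpa [hlam, sub_eq_zero] using this
  · refine Prod.ext ?_ ?_
    · have : (a.1 - a'.1) * (b.1 * b'.2 - b.2 * b'.1) = 0 := by
        linear_combination b'.2 * h₁ - b'.2 * h₃ - b.2 * h₂ + b.2 * h₄
      simpa [hdet, sub_eq_zero] using this
    · have : (a.2 - a'.2) * (b.1 * b'.2 - b.2 * b'.1) = 0 := by
        linear_combination b'.1 * h₁ - b'.1 * h₃ - b.1 * h₂ + b.1 * h₄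
      simpa [hdet, sub_eq_zero] using this

theorem sum_card_bipartiteAbove_isIncident {lam : F} (hlam : lam ≠ 0) (B : Finset (F × F)) :
    ∑ a, #(B.bipartiteAbove (IsIncident lam) a) = Fintype.card F * #(B.erase 0) := by
  rw [sum_card_bipartiteAbove_eq_sum_card_bipartiteBelow, ← sum_erase B (a := 0)
      (by rw [bipartiteBelow_isIncident_zero hlam, card_empty]),
    sum_congr rfl fun b hb => card_bipartiteBelow_isIncident lam (ne_of_mem_erase hb),
    sum_const, smul_eq_mul, mul_comm]

theorem sum_card_bipartiteAbove_isIncident_sq_le {lam : F} (hlam : lam ≠ 0)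
    (B : Finset (F × F)) :
    ∑ a, #(B.bipartiteAbove (IsIncident lam) a) ^ 2 ≤ #B * (Fintype.card F + (#B - 1)) := by
  refine sum_card_bipartiteAbove_sq_le (fun b _ => ?_)
    fun b _ b' _ hne => card_isIncident_and_isIncident_le_one hlam hne
  rcases eq_or_ne b 0 with rfl | hb
  · simp [bipartiteBelow_isIncident_zero hlam]
  · exact (card_bipartiteBelow_isIncident lam hb).le

theorem abs_card_isIncident_sub_div_card_le {lam : F} (hlam : lam ≠ 0) (A B : Finset (F × F)) :
    |(#{ab ∈ A ×ˢ B | IsIncident lam ab.1 ab.2} : ℝ) - #A * #B / Fintype.card F|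
      ≤ √((Fintype.card F + 1) * (#A * #B)) := by
  rcases B.eq_empty_or_nonempty with rfl | hB
  · simp
  have h₁ : (Fintype.card F : ℝ) * (#B - 1)
      ≤ ∑ a, (#(B.bipartiteAbove (IsIncident lam) a) : ℝ) := by
    have : #B ≤ #(B.erase 0) + 1 := by have := pred_card_le_card_erase (s := B) (a := 0); omega
    rw [← Nat.cast_sum, sum_card_bipartiteAbove_isIncident hlam B, Nat.cast_mul]
    gcongr
    linarith [(by exact_mod_cast this : (#B : ℝ) ≤ #(B.erase 0) + 1)]
  have h₂ : ∑ a, (#(B.bipartiteAbove (IsIncident lam) a) : ℝ) ^ 2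
      ≤ #B * (Fintype.card F + (#B - 1)) := by
    have hB₁ : 1 ≤ #B := hB.card_pos
    exact_mod_cast sum_card_bipartiteAbove_isIncident_sq_le hlam B
  have hvar := sum_sq_sub_div_le _ (by exact_mod_cast Fintype.card_pos) (by positivity)
    (by simp [Fintype.card_prod, sq]) h₁ h₂
  have hdev := (abs_sum_sub_card_mul_le_sqrt A _ _).trans
    (Real.sqrt_le_sqrt (mul_le_mul_of_nonneg_left hvar (Nat.cast_nonneg #A)))
  have hI : #{ab ∈ A ×ˢ B | IsIncident lam ab.1 ab.2}
      = ∑ a ∈ A, #(B.bipartiteAbove (IsIncident lam) a) :=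
    card_filter_product_eq_sum_card_bipartiteAbove (IsIncident lam) A B
  rwa [hI, Nat.cast_sum, mul_div_assoc, mul_left_comm (_ + 1 : ℝ)]

theorem abs_card_isIncident_sub_le_rpow_logb {lam : F} (hlam : lam ≠ 0)
    (A B : Finset (F × F)) :
    |(#{ab ∈ A ×ˢ B | IsIncident lam ab.1 ab.2} : ℝ)
        - #A * #B / (Fintype.card F * (1 - (Fintype.card F : ℝ)⁻¹ ^ 2))|
      ≤ 2 * Fintype.card F * (3 * Real.logb 2 (Fintype.card F) / Fintype.card F) ^ (1 / 4 : ℝ)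
          * √(#A * #B) := by
  have hq : (2 : ℝ) ≤ Fintype.card F := by exact_mod_cast Fintype.one_lt_card
  have hcard (C : Finset (F × F)) : (#C : ℝ) ≤ (Fintype.card F : ℝ) ^ 2 := by
    exact_mod_cast (card_le_univ C).trans_eq (by rw [Fintype.card_prod, sq])
  have hAB : (#A : ℝ) * #B ≤ (Fintype.card F : ℝ) ^ 4 := by
    calc (#A : ℝ) * #B ≤ (Fintype.card F : ℝ) ^ 2 * (Fintype.card F : ℝ) ^ 2 := by
          gcongr <;> exact hcard _
      _ = (Fintype.card F : ℝ) ^ 4 := by ring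
  calc _ ≤ 2 * √(Fintype.card F : ℝ) * √(#A * #B) :=
        abs_sub_div_mul_one_sub_inv_sq_le hq (by positivity) hAB
          (abs_card_isIncident_sub_div_card_le hlam A B)
    _ ≤ _ := by
      rw [mul_assoc 2 (Fintype.card F : ℝ)]
      gcongr
      exact sqrt_le_mul_rpow_logb hq

end Incidence

theorem stmt13_general (q : ℕ) [Fact (Nat.Prime q)]
    (lam : ZMod q) (hlam : IsUnit lam) (A B : Finset (ZMod q × ZMod q)) :
    |(((A ×ˢ B).filter (fun ab =>
          ab.1.1 * ab.2.1 - ab.1.2 * ab.2.2 = lam)).card : ℝ)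
        - (A.card : ℝ) * B.card / ((q : ℝ) * (1 - ((q : ℝ))⁻¹ ^ 2))|
      ≤ 2 * (q : ℝ) * (3 * Real.logb 2 q / q) ^ ((1 : ℝ) / 4)
          * Real.sqrt ((A.card : ℝ) * B.card) := by
  simpa only [ZMod.card] using abs_card_isIncident_sub_le_rpow_logb hlam.ne_zero A B

/-- incidence bound for the equation `a₁b₁ - a₂b₂ = λ` over `ℤ/qℤ`,
`q` an odd prime, `λ` a unit:
`|I_λ(𝒜,ℬ) - |𝒜||ℬ|/(q(1-q^{-2}))| ≤ 2 q (3 log₂ q / q)^{1/4} √(|𝒜||ℬ|)`. -/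
theorem stmt13 (q : ℕ) [Fact (Nat.Prime q)] (hq : q ≠ 2)
    (lam : ZMod q) (hlam : IsUnit lam) (A B : Finset (ZMod q × ZMod q)) :
    |(((A ×ˢ B).filter (fun ab =>
          ab.1.1 * ab.2.1 - ab.1.2 * ab.2.2 = lam)).card : ℝ)
        - (A.card : ℝ) * B.card / ((q : ℝ) * (1 - ((q : ℝ))⁻¹ ^ 2))|
      ≤ 2 * (q : ℝ) * (3 * Real.logb 2 q / q) ^ ((1 : ℝ) / 4)
          * Real.sqrt ((A.card : ℝ) * B.card) :=
  stmt13_general q lam hlam A B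
end
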